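/- Let (Ω, 𝔉, P) be a probability space, S a finite set, b ∈ (0,∞), m ∈ ℝ, and f : S × Ω → ℝ a function such that for every s ∈ S the map f(s, ·) is measurable, takes values in [0, b], and satisfies E[f(s, ·)] ≤ m. Then for every μ > 0 there exists α with 0 < α ≤ min{1, (b/2)·e^{−2b}} such that for every positive integer K with |S|·exp( −(α·μ + α²·b²)·K ) < 1, there exist points ω_1, …, ω_K ∈ Ω such that for every s ∈ S one has (1/K)·Σ_{i=1}^K f(s, ω_i) ≤ m + μ. -/

import Mathlib

/-!
Draw `ω_1, …, ω_K` independently from `P`. For each `s`, the centred variables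
`f s (ω_i) - E[f s]` take values in an interval of length `b`, so Hoeffding's inequality bounds
the probability that their sum reaches `Kμ` by `exp (-2μ²K / b²)`. Any `α ≤ μ / b²` has
`αμ + α²b² ≤ 2μ²/b²`, so under the hypothesis on `K` the union bound over `S` leaves the bad
events a total probability below one, and some sample avoids all of them.
-/

open MeasureTheory ProbabilityTheory

theorem measureReal_card_mul_integral_add_le_sum_le {Ω ι : Type*} [MeasurableSpace Ω]
    [Fintype ι] {P : Measure Ω} [IsProbabilityMeasure P] {X : Ω → ℝ} (hX : AEMeasurable X P)
    {a b : ℝ} (hab : ∀ᵐ x ∂P, X x ∈ Set.Icc a b) {ε : ℝ} (hε : 0 ≤ ε) :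
    (Measure.pi fun _ : ι ↦ P).real {ω | Fintype.card ι * P[X] + ε ≤ ∑ i, X (ω i)} ≤
      Real.exp (-2 * ε ^ 2 / (Fintype.card ι * (b - a) ^ 2)) := by
  have h_indep := iIndepFun_pi (μ := fun _ : ι ↦ P) (fun _ ↦ hX.sub_const P[X])
  have h_subG : ∀ i ∈ (Finset.univ : Finset ι),
      HasSubgaussianMGF (fun ω : ι → Ω ↦ X (ω i) - P[X]) ((‖b - a‖₊ / 2) ^ 2)
        (Measure.pi fun _ : ι ↦ P) := fun i _ ↦
    .of_map (measurable_pi_apply i).aemeasurable <| by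
      rw [(measurePreserving_eval (fun _ : ι ↦ P) i).map_eq]
      exact hasSubgaussianMGF_of_mem_Icc hX hab
  convert HasSubgaussianMGF.measure_sum_ge_le_of_iIndepFun h_indep h_subG hε using 2
  · simp only [Finset.sum_sub_distrib, Finset.sum_const, Finset.card_univ, nsmul_eq_mul,
      le_sub_iff_add_le']
  · push_cast
    rw [Finset.sum_const, Finset.card_univ, nsmul_eq_mul, Real.norm_eq_abs, div_pow, sq_abs,
      show 2 * (Fintype.card ι * ((b - a) ^ 2 / 2 ^ 2)) = Fintype.card ι * (b - a) ^ 2 / 2 by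
        ring,
      div_div_eq_mul_div]
    ring

theorem exists_forall_notMem_of_measureReal_le {β S : Type*} [MeasurableSpace β] [Fintype S]
    {Q : Measure β} [IsProbabilityMeasure Q] {A : S → Set β} {δ : ℝ}
    (hA : ∀ s, Q.real (A s) ≤ δ) (hδ : Fintype.card S * δ < 1) : ∃ x, ∀ s, x ∉ A s := by
  have hunion : Q.real (⋃ s, A s) < 1 :=
    calc Q.real (⋃ s, A s) ≤ ∑ s, Q.real (A s) := measureReal_iUnion_fintype_le A
      _ ≤ ∑ _s : S, δ := Finset.sum_le_sum fun s _ ↦ hA s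
      _ = Fintype.card S * δ := by simp
      _ < 1 := hδ
  by_contra! hcover
  rw [Set.iUnion_eq_univ_iff.2 hcover, probReal_univ] at hunion
  exact hunion.false

theorem mul_add_sq_mul_sq_le_of_le_div {α μ b : ℝ} (hα : 0 ≤ α) (hμ : 0 ≤ μ) (hb : 0 < b)
    (hαμ : α ≤ μ / b ^ 2) : α * μ + α ^ 2 * b ^ 2 ≤ 2 * μ ^ 2 / b ^ 2 := by
  rw [le_div_iff₀ (by positivity)] at hαμ
  rw [le_div_iff₀ (by positivity)]
  nlinarith [mul_le_mul hαμ hαμ (by positivity) hμ]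

/-- de-randomization / elimination step:
If `f s` is a `[0, b]`-valued measurable function with `E[f s] ≤ m` for every `s` in a
finite set `S`, then for every `μ > 0` there is `α` with `0 < α ≤ min {1, (b/2)·e^{-2b}}`
such that for every `K` with `|S|·exp(-(αμ + α²b²)·K) < 1` there exist sample points
`ω_1, …, ω_K` with `(1/K)·Σ_i f s ω_i ≤ m + μ` for every `s ∈ S`. -/
theorem stmt2
    {Ω : Type*} [MeasurableSpace Ω] (P : Measure Ω) [IsProbabilityMeasure P]
    (S : Type*) [Fintype S]
    (b m : ℝ) (hb : 0 < b)
    (f : S → Ω → ℝ)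
    (hmeas : ∀ s, Measurable (f s))
    (hbdd : ∀ s ω, f s ω ∈ Set.Icc 0 b)
    (hm : ∀ s, (∫ ω, f s ω ∂P) ≤ m) :
    ∀ μ : ℝ, 0 < μ →
      ∃ α : ℝ, 0 < α ∧ α ≤ min 1 (b / 2 * Real.exp (-2 * b)) ∧
        ∀ K : ℕ, 0 < K →
          (Fintype.card S : ℝ) * Real.exp (-(α * μ + α ^ 2 * b ^ 2) * K) < 1 →
          ∃ ω : Fin K → Ω, ∀ s : S, (1 / (K : ℝ)) * ∑ i, f s (ω i) ≤ m + μ := by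
  intro μ hμ
  set α := min (min 1 (b / 2 * Real.exp (-2 * b))) (μ / b ^ 2)
  have hα : 0 < α := lt_min (lt_min one_pos (by positivity)) (by positivity)
  have hrate := mul_add_sq_mul_sq_le_of_le_div hα.le hμ.le hb (min_le_right _ _)
  refine ⟨α, hα, min_le_left _ _, fun K hK hcard ↦ ?_⟩
  have hbad : ∀ s, (Measure.pi fun _ : Fin K ↦ P).real
      {ω | K * P[f s] + K * μ ≤ ∑ i, f s (ω i)} ≤ Real.exp (-(α * μ + α ^ 2 * b ^ 2) * K) := by
    intro s
    have hhoeffding := measureReal_card_mul_integral_add_le_sum_le (ι := Fin K) (P := P)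
      (hmeas s).aemeasurable (ae_of_all _ (hbdd s)) (by positivity : 0 ≤ (K : ℝ) * μ)
    rw [Fintype.card_fin] at hhoeffding
    refine hhoeffding.trans (Real.exp_le_exp.2 ?_)
    rw [sub_zero, show -2 * (K * μ) ^ 2 / (K * b ^ 2) = -(2 * μ ^ 2 / b ^ 2) * K by field_simp]
    gcongr
  obtain ⟨ω, hω⟩ := exists_forall_notMem_of_measureReal_le hbad hcard
  refine ⟨ω, fun s ↦ ?_⟩
  have hsum : ∑ i, f s (ω i) < (m + μ) * K := by
    have := not_le.1 (Set.notMem_ofPred_iff.1 (hω s))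
    nlinarith [hm s]
  rw [one_div_mul_eq_div, div_le_iff₀ (Nat.cast_pos.2 hK)]
  exact hsum.le
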